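/- Let (a_k)_{k≥0} be nonnegative with a_k ≤ η₂ + C⋆ a_{k-1}² for k ≥ 1 and a₀ ≤ A₀, where C⋆ η₂ + C⋆ A₀ ≤ 1/4. Then a_k ≤ 2η₂ + 4^{1-2^k} A₀ for all k ≥ 0. -/

import Mathlib

/-!
Write `b k = 4 ^ (1 - 2 ^ k)`, so that `b 0 = 1`, `b (k + 1) = b k ^ 2 / 4` and `b k ≤ 1`.
If `0 ≤ x ≤ 2η + b A`, then expanding `C (2η + b A)²` and using `C η + C A ≤ 1/4` bounds the
cross terms `4 C η (η + b A)` by `η` and the last term `C b² A²` by `b² A / 4`, so one step of the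
recursion `x ↦ η + C x²` lands below `2η + b² A / 4`; induction on `k` gives the claim.
-/

lemma rpow_four_one_sub_two_pow_le_one (k : ℕ) : (4 : ℝ) ^ ((1 : ℝ) - 2 ^ k) ≤ 1 :=
  Real.rpow_le_one_of_one_le_of_nonpos (by norm_num)
    (sub_nonpos.mpr (one_le_pow₀ (by norm_num)))

lemma rpow_four_one_sub_two_pow_succ (k : ℕ) :
    (4 : ℝ) ^ ((1 : ℝ) - 2 ^ (k + 1)) = ((4 : ℝ) ^ ((1 : ℝ) - 2 ^ k)) ^ 2 / 4 := by
  have hexp : (1 : ℝ) - 2 ^ (k + 1) = ((1 : ℝ) - 2 ^ k) * (2 : ℕ) - 1 := by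
    push_cast; ring
  rw [hexp, Real.rpow_sub (by norm_num), Real.rpow_one, Real.rpow_mul (by norm_num),
    Real.rpow_natCast]

lemma add_mul_sq_le_of_le_two_mul_add {η C A b x : ℝ} (hη : 0 ≤ η) (hC : 0 ≤ C) (hA : 0 ≤ A)
    (hb : b ≤ 1) (hsmall : C * η + C * A ≤ 1 / 4) (hx₀ : 0 ≤ x) (hx : x ≤ 2 * η + b * A) :
    η + C * x ^ 2 ≤ 2 * η + b ^ 2 / 4 * A := by
  have hCA : C * A ≤ 1 / 4 := by nlinarith [mul_nonneg hC hη]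
  have hcross : C * (4 * η ^ 2 + 4 * η * b * A) ≤ η := by
    have hbA : b * A ≤ A := mul_le_of_le_one_left hA hb
    nlinarith [mul_le_mul_of_nonneg_left hsmall hη, mul_nonneg hC hη]
  have hlast : C * (b ^ 2 * A ^ 2) ≤ b ^ 2 / 4 * A := by
    nlinarith [mul_nonneg (sq_nonneg b) hA]
  have hsq : x ^ 2 ≤ (2 * η + b * A) ^ 2 := pow_le_pow_left₀ hx₀ hx 2
  calc η + C * x ^ 2 ≤ η + C * (2 * η + b * A) ^ 2 := by gcongr
    _ = η + C * (4 * η ^ 2 + 4 * η * b * A) + C * (b ^ 2 * A ^ 2) := by ring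
    _ ≤ 2 * η + b ^ 2 / 4 * A := by linarith

theorem stmt18 (a : ℕ → ℝ) (η₂ Cstar A₀ : ℝ)
    (hnonneg : ∀ k, 0 ≤ a k)
    (hrec : ∀ k : ℕ, 1 ≤ k → a k ≤ η₂ + Cstar * (a (k - 1)) ^ 2)
    (h0 : a 0 ≤ A₀)
    (hη : 0 < η₂) (hC : 0 < Cstar) (hA₀ : 0 ≤ A₀)
    (hsmall : Cstar * η₂ + Cstar * A₀ ≤ 1 / 4) :
    ∀ k : ℕ, a k ≤ 2 * η₂ + (4 : ℝ) ^ ((1 : ℝ) - 2 ^ k) * A₀ := by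
  intro k
  induction k with
  | zero => norm_num; linarith
  | succ k ih =>
    rw [rpow_four_one_sub_two_pow_succ]
    calc a (k + 1) ≤ η₂ + Cstar * a k ^ 2 := hrec (k + 1) k.succ_pos
      _ ≤ _ := add_mul_sq_le_of_le_two_mul_add hη.le hC.le hA₀
          (rpow_four_one_sub_two_pow_le_one k) hsmall (hnonneg k) ih
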